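/- arXiv:1502.07695 — 3 statements merged into one kernel-verified Lean document; each statement's English description precedes it below -/
import Mathlib

section
/- Let A be a real m×n matrix of rank n with m ≥ n, and let b ∈ ℝ^m. For each subset p of {1,…,m} with |p| = n, let A_p denote the n×n submatrix of A consisting of the rows of A indexed by p (in their original order) and let b_p denote the corresponding subvector of b. Then the weighted average of the sub-solutions, x̂ = (Σ_{p : det(A_p) ≠ 0} det(A_p)² · A_p⁻¹ b_p) / (Σ_{p, |p|=n} det(A_p)²), is well defined and equals the least-square solution (AᵀA)⁻¹ Aᵀ b. -/
open scoped Classical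
open Matrix

/-- `rowSub A p h` is the `n × n` submatrix of the `m × n` matrix `A` consisting of the
rows of `A` indexed by the subset `p ⊆ {1,…,m}` of size `n`, kept in their original order. -/
noncomputable def rowSub {m n : ℕ} (A : Matrix (Fin m) (Fin n) ℝ)
    (p : Finset (Fin m)) (h : p.card = n) : Matrix (Fin n) (Fin n) ℝ :=
  fun i j => A (p.orderEmbOfFin h i) j

/-- `vecSub b p h` is the subvector of `b ∈ ℝ^m` with indices in `p`, in their original order. -/
noncomputable def vecSub {m n : ℕ} (b : Fin m → ℝ)
    (p : Finset (Fin m)) (h : p.card = n) : Fin n → ℝ :=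
  fun i => b (p.orderEmbOfFin h i)

/-!
By Cauchy–Binet, `det (Aᵀ A) = ∑ₚ det (A_p)²`, which is nonzero because `Aᵀ A` has the rank `n`
of `A`. Solve the normal equations `Aᵀ A x = Aᵀ b` by Cramer's rule: replacing column `j` of
`Aᵀ A` by `Aᵀ b` gives `Aᵀ (A with column j replaced by b)`, and Cauchy–Binet again splits its
determinant as `∑ₚ det (A_p) · det (A_p with column j replaced by b_p)`. By Cramer's rule for each
`A_p`, the second factor is `det (A_p) · (A_p⁻¹ b_p)_j` (and the term vanishes when `det A_p = 0`).
-/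

open Finset Function in
theorem Finset.sum_injective_eq_sum_sum_orderEmbOfFin_comp_perm {ι β : Type*} [Fintype ι]
    [LinearOrder ι] [AddCommMonoid β] {n : ℕ} (f : (Fin n → ι) → β) :
    ∑ r with Injective r, f r = ∑ s : {s : Finset ι // s.card = n},
      ∑ σ : Equiv.Perm (Fin n), f (s.1.orderEmbOfFin s.2 ∘ σ) := by
  rw [← Fintype.sum_prod_type']
  refine (sum_bij (fun q _ => q.1.1.orderEmbOfFin q.1.2 ∘ q.2) ?_ ?_ ?_ fun _ _ => rfl).symm
  · intro q _
    simpa using (q.1.1.orderEmbOfFin q.1.2).injective.comp q.2.injective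
  · rintro ⟨⟨s, hs⟩, σ⟩ - ⟨⟨t, ht⟩, τ⟩ - hst
    have hrange := congrArg Set.range hst
    simp only [Set.range_comp, Equiv.range_eq_univ, Set.image_univ, range_orderEmbOfFin,
      coe_inj] at hrange
    subst hrange
    have hστ : σ = τ := Equiv.ext fun i => (s.orderEmbOfFin hs).injective (congrFun hst i)
    subst hστ
    rfl
  · intro r hr
    replace hr : Injective r := by simpa using hr
    have hcard : (univ.image r).card = n := by simp [card_image_of_injective _ hr]
    -- `r` sorted is strictly monotone, hence the order embedding of its image
    have hsorted : r ∘ Tuple.sort r = (univ.image r).orderEmbOfFin hcard :=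
      orderEmbOfFin_unique hcard (fun i => mem_image_of_mem r (mem_univ _))
        ((Tuple.monotone_sort r).strictMono_of_injective (hr.comp (Tuple.sort r).injective))
    refine ⟨(⟨_, hcard⟩, (Tuple.sort r)⁻¹), mem_univ _, ?_⟩
    rw [← hsorted]
    ext i
    simp

namespace Matrix
variable {R : Type*} [CommRing R]

theorem det_mul_eq_sum_prod_mul_det_submatrix {n ι : Type*} [Fintype n] [DecidableEq n]
    [Fintype ι] (M : Matrix n ι R) (N : Matrix ι n R) :
    (M * N).det = ∑ r : n → ι, (∏ i, M i (r i)) * (N.submatrix r id).det := by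
  have hrows : M * N = fun i => ∑ k, M i k • N k := by
    ext i j
    simp [mul_apply, Finset.sum_apply]
  rw [det, hrows, ← AlternatingMap.coe_multilinearMap, MultilinearMap.map_sum]
  simp_rw [MultilinearMap.map_smul_univ, smul_eq_mul]
  rfl

theorem det_submatrix_eq_zero_of_not_injective {n ι : Type*} [Fintype n] [DecidableEq n]
    {r : n → ι} (hr : ¬ Function.Injective r) (N : Matrix ι n R) :
    (N.submatrix r id).det = 0 := by
  obtain ⟨i, j, hij, hne⟩ : ∃ i j, r i = r j ∧ i ≠ j := by
    simpa [Function.Injective] using hr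
  exact det_zero_of_row_eq hne (by ext k; simp [hij])

theorem cauchy_binet {ι : Type*} [Fintype ι] [LinearOrder ι] {n : ℕ}
    (M : Matrix (Fin n) ι R) (N : Matrix ι (Fin n) R) :
    (M * N).det = ∑ s : {s : Finset ι // s.card = n},
      (M.submatrix id (s.1.orderEmbOfFin s.2)).det *
        (N.submatrix (s.1.orderEmbOfFin s.2) id).det := by
  rw [det_mul_eq_sum_prod_mul_det_submatrix, ← Finset.sum_filter_of_ne fun r _ h =>
      not_not.1 fun hr => h (by rw [det_submatrix_eq_zero_of_not_injective hr, mul_zero]),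
    Finset.sum_injective_eq_sum_sum_orderEmbOfFin_comp_perm]
  refine Finset.sum_congr rfl fun s _ => ?_
  set e := s.1.orderEmbOfFin s.2
  calc ∑ σ : Equiv.Perm (Fin n), (∏ i, M i (e (σ i))) * (N.submatrix (e ∘ σ) id).det
      = ∑ σ : Equiv.Perm (Fin n), (Equiv.Perm.sign σ * ∏ i, M i (e (σ i))) *
          (N.submatrix e id).det := by
        refine Finset.sum_congr rfl fun σ _ => ?_
        rw [show N.submatrix (e ∘ σ) id = (N.submatrix e id).submatrix σ id from rfl, det_permute]
        ring
    _ = (M.submatrix id e).det * (N.submatrix e id).det := by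
        rw [← Finset.sum_mul, ← det_transpose (M.submatrix id e), det_apply' (M.submatrix id e)ᵀ]
        rfl

theorem isUnit_of_rank_eq_card {K n : Type*} [Field K] [Fintype n] [DecidableEq n]
    {B : Matrix n n K} (h : B.rank = Fintype.card n) : IsUnit B :=
  linearIndependent_cols_iff_isUnit.1 <|
    linearIndependent_iff_card_eq_finrank_span.2 (by rw [← h, rank_eq_finrank_span_cols]; rfl)

theorem det_sq_smul_inv_mulVec_eq_det_smul_cramer {n : Type*} [Fintype n] [DecidableEq n]
    (B : Matrix n n R) (v : n → R) (h : IsUnit B.det) :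
    B.det ^ 2 • (B⁻¹ *ᵥ v) = B.det • cramer B v := by
  rw [← det_smul_inv_mulVec_eq_cramer B v h, sq, mul_smul]

end Matrix

section LeastSquares
variable {m n : ℕ} (A : Matrix (Fin m) (Fin n) ℝ)

theorem det_transpose_submatrix_orderEmbOfFin (p : Finset (Fin m)) (h : p.card = n) :
    (Aᵀ.submatrix id (p.orderEmbOfFin h)).det = (rowSub A p h).det :=
  det_transpose (rowSub A p h)

theorem det_transpose_mul_self_eq_sum_sq_det_rowSub :
    (Aᵀ * A).det = ∑ p : {s : Finset (Fin m) // s.card = n}, (rowSub A p.1 p.2).det ^ 2 := by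
  rw [cauchy_binet]
  refine Finset.sum_congr rfl fun p _ => ?_
  rw [det_transpose_submatrix_orderEmbOfFin, sq]
  rfl

theorem rowSub_updateCol (b : Fin m → ℝ) (p : Finset (Fin m)) (h : p.card = n) (j : Fin n) :
    rowSub (A.updateCol j b) p h = (rowSub A p h).updateCol j (vecSub b p h) := by
  ext i k
  simp only [rowSub, vecSub, updateCol_apply]

theorem cramer_transpose_mul_self_mulVec (b : Fin m → ℝ) :
    cramer (Aᵀ * A) (Aᵀ *ᵥ b) = ∑ p : {s : Finset (Fin m) // s.card = n},
      (rowSub A p.1 p.2).det • cramer (rowSub A p.1 p.2) (vecSub b p.1 p.2) := by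
  funext j
  rw [cramer_apply, ← mul_updateCol, cauchy_binet, Finset.sum_apply]
  refine Finset.sum_congr rfl fun p _ => ?_
  rw [det_transpose_submatrix_orderEmbOfFin, Pi.smul_apply, smul_eq_mul, cramer_apply,
    ← rowSub_updateCol]
  rfl

end LeastSquares

theorem weighted_average_eq_least_squares_general {m n : ℕ}
    (A : Matrix (Fin m) (Fin n) ℝ) (hA : A.rank = n) (b : Fin m → ℝ) :
    (∑ p : {s : Finset (Fin m) // s.card = n}, (rowSub A p.1 p.2).det ^ 2) ≠ 0 ∧
    (∑ p : {s : Finset (Fin m) // s.card = n}, (rowSub A p.1 p.2).det ^ 2)⁻¹ •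
      (∑ p : {s : Finset (Fin m) // s.card = n},
        if (rowSub A p.1 p.2).det ≠ 0 then
          ((rowSub A p.1 p.2).det ^ 2) • ((rowSub A p.1 p.2)⁻¹ *ᵥ vecSub b p.1 p.2)
        else 0) =
    ((A.transpose * A)⁻¹ * A.transpose) *ᵥ b := by
  rw [← det_transpose_mul_self_eq_sum_sq_det_rowSub]
  have hunit : IsUnit (Aᵀ * A).det :=
    (isUnit_iff_isUnit_det _).1 <| isUnit_of_rank_eq_card <| by
      rw [rank_transpose_mul_self, hA, Fintype.card_fin]
  have hterm : ∀ p : {s : Finset (Fin m) // s.card = n},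
      (if (rowSub A p.1 p.2).det ≠ 0 then
        ((rowSub A p.1 p.2).det ^ 2) • ((rowSub A p.1 p.2)⁻¹ *ᵥ vecSub b p.1 p.2) else 0) =
      (rowSub A p.1 p.2).det • cramer (rowSub A p.1 p.2) (vecSub b p.1 p.2) := fun p => by
    split_ifs with h
    · exact det_sq_smul_inv_mulVec_eq_det_smul_cramer _ _ h.isUnit
    · rw [not_not.1 h, zero_smul]
  refine ⟨hunit.ne_zero, ?_⟩
  rw [Finset.sum_congr rfl fun p _ => hterm p, ← cramer_transpose_mul_self_mulVec,
    ← mulVec_mulVec, ← det_smul_inv_mulVec_eq_cramer _ _ hunit, inv_smul_smul₀ hunit.ne_zero]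

theorem weighted_average_eq_least_squares {m n : ℕ} (hmn : n ≤ m)
    (A : Matrix (Fin m) (Fin n) ℝ) (hA : A.rank = n) (b : Fin m → ℝ) :
    (∑ p : {s : Finset (Fin m) // s.card = n}, (rowSub A p.1 p.2).det ^ 2) ≠ 0 ∧
    (∑ p : {s : Finset (Fin m) // s.card = n}, (rowSub A p.1 p.2).det ^ 2)⁻¹ •
      (∑ p : {s : Finset (Fin m) // s.card = n},
        if (rowSub A p.1 p.2).det ≠ 0 then
          ((rowSub A p.1 p.2).det ^ 2) • ((rowSub A p.1 p.2)⁻¹ *ᵥ vecSub b p.1 p.2)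
        else 0) =
    ((A.transpose * A)⁻¹ * A.transpose) *ᵥ b :=
  weighted_average_eq_least_squares_general A hA b
end

section
/- Let A be an arbitrary real m×n matrix with m ≥ n (no rank assumption). Then adj(AᵀA) · Aᵀ = Σ_{p ⊆ {1,…,m}, |p| = n} det(A_p) · embb(adj(A_p), p, m), where adj denotes the adjugate matrix and the sum ranges over all subsets p of {1,…,m} of size n. -/
open scoped Classical
open Matrix

/-- `embb B p h` is the `n × m` matrix whose `pᵢ`-th column is the `i`-th column of the
`n × n` matrix `B` (where `p₁ < … < p_n` are the elements of `p`), and whose other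
columns are zero. -/
noncomputable def embb {m n : ℕ} (B : Matrix (Fin n) (Fin n) ℝ)
    (p : Finset (Fin m)) (h : p.card = n) : Matrix (Fin n) (Fin m) ℝ :=
  fun i k => if hk : k ∈ p then B i ((p.orderIsoOfFin h).symm ⟨k, hk⟩) else 0

section CB
open Finset

variable {m n : ℕ}

lemma orderEmbOfFin_congr {s t : Finset (Fin m)} (hs : s.card = n) (ht : t.card = n)
    (hst : s = t) : s.orderEmbOfFin hs = t.orderEmbOfFin ht := by
  subst hst; rfl

/-- The permutation associated to an injective function `f : Fin n → Fin m`. -/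
noncomputable def permOf (f : Fin n → Fin m) (hf : Function.Injective f)
    (hc : (Finset.image f Finset.univ).card = n) : Equiv.Perm (Fin n) :=
  Equiv.ofBijective
    (fun i => ((Finset.image f Finset.univ).orderIsoOfFin hc).symm
      ⟨f i, Finset.mem_image_of_mem f (Finset.mem_univ i)⟩)
    (Finite.injective_iff_bijective.mp (fun a b hab => hf (by
      have h2 := congrArg
        (fun z => (((Finset.image f Finset.univ).orderIsoOfFin hc) z : Fin m)) hab
      simpa using h2)))

lemma permOf_apply (f : Fin n → Fin m) (hf : Function.Injective f)
    (hc : (Finset.image f Finset.univ).card = n) (i : Fin n) :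
    (Finset.image f Finset.univ).orderEmbOfFin hc (permOf f hf hc i) = f i := by
  show ((Finset.image f Finset.univ).orderEmbOfFin hc)
    (((Finset.image f Finset.univ).orderIsoOfFin hc).symm ⟨f i, _⟩) = f i
  rw [← Finset.coe_orderIsoOfFin_apply, OrderIso.apply_symm_apply]

lemma image_orderEmbOfFin (p : Finset (Fin m)) (h : p.card = n) (σ : Equiv.Perm (Fin n)) :
    Finset.image (fun i => p.orderEmbOfFin h (σ i)) Finset.univ = p := by
  ext k
  simp only [Finset.mem_image, Finset.mem_univ, true_and]
  constructor
  · rintro ⟨i, rfl⟩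
    exact Finset.orderEmbOfFin_mem p h (σ i)
  · intro hk
    have : k ∈ Set.range (p.orderEmbOfFin h) := by
      rw [Finset.range_orderEmbOfFin]; exact hk
    obtain ⟨r, hr⟩ := this
    exact ⟨σ.symm r, by simp [hr]⟩

lemma sum_injective_eq (g : (Fin n → Fin m) → ℝ) :
    ∑ f ∈ Finset.univ.filter (fun f : Fin n → Fin m => Function.Injective f), g f
    = ∑ x : {s : Finset (Fin m) // s.card = n} × Equiv.Perm (Fin n),
        g (fun i => x.1.1.orderEmbOfFin x.1.2 (x.2 i)) := by
  have hcard : ∀ f : Fin n → Fin m, Function.Injective f →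
      (Finset.image f Finset.univ).card = n := fun f hf => by
    rw [Finset.card_image_of_injective _ hf, Finset.card_univ, Fintype.card_fin]
  refine Finset.sum_bij
    (fun f hf => (⟨⟨Finset.image f Finset.univ,
        hcard f (by simpa using hf)⟩,
        permOf f (by simpa using hf) (hcard f (by simpa using hf))⟩ :
        {s : Finset (Fin m) // s.card = n} × Equiv.Perm (Fin n)))
    (fun _ _ => Finset.mem_univ _) ?_ ?_ ?_
  · -- injectivity
    intro f hf f' hf' heq
    have hinj : Function.Injective f := by simpa using hf
    have hinj' : Function.Injective f' := by simpa using hf'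
    funext i
    have h1 := permOf_apply f hinj (hcard f hinj) i
    have h2 := permOf_apply f' hinj' (hcard f' hinj') i
    have e1 : (⟨Finset.image f Finset.univ, hcard f hinj⟩ :
        {s : Finset (Fin m) // s.card = n}) = ⟨Finset.image f' Finset.univ, hcard f' hinj'⟩ :=
      congrArg Prod.fst heq
    have e2 : permOf f hinj (hcard f hinj) = permOf f' hinj' (hcard f' hinj') :=
      congrArg Prod.snd heq
    have e1' : Finset.image f Finset.univ = Finset.image f' Finset.univ :=
      congrArg Subtype.val e1
    rw [← h1, ← h2, e2]
    rw [orderEmbOfFin_congr (hcard f hinj) (hcard f' hinj') e1']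
  · -- surjectivity
    rintro ⟨⟨p, hp⟩, σ⟩ -
    refine ⟨fun i => p.orderEmbOfFin hp (σ i), ?_, ?_⟩
    · simp only [Finset.mem_filter, Finset.mem_univ, true_and]
      exact fun a b hab => σ.injective ((p.orderEmbOfFin hp).injective hab)
    · set f : Fin n → Fin m := fun i => p.orderEmbOfFin hp (σ i) with hfdef
      have hinj : Function.Injective f :=
        fun a b hab => σ.injective ((p.orderEmbOfFin hp).injective hab)
      have himg : Finset.image f Finset.univ = p := image_orderEmbOfFin p hp σ
      have e1 : (⟨Finset.image f Finset.univ, hcard f hinj⟩ :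
          {s : Finset (Fin m) // s.card = n}) = ⟨p, hp⟩ := Subtype.ext himg
      refine Prod.ext ?_ ?_
      · simpa using e1
      · show permOf f hinj (hcard f hinj) = σ
        refine Equiv.ext fun i => ?_
        have h1 := permOf_apply f hinj (hcard f hinj) i
        have h2 : (Finset.image f Finset.univ).orderEmbOfFin (hcard f hinj) =
            p.orderEmbOfFin hp := orderEmbOfFin_congr _ _ himg
        apply ((Finset.image f Finset.univ).orderEmbOfFin (hcard f hinj)).injective
        rw [h1, h2]
  · intro f hf
    have hinj : Function.Injective f := by simpa using hf
    congr 1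
    funext i
    exact (permOf_apply f hinj (hcard f hinj) i).symm

/-- Cauchy–Binet formula. -/
lemma cauchy_binet (B : Matrix (Fin n) (Fin m) ℝ) (C : Matrix (Fin m) (Fin n) ℝ) :
    (B * C).det = ∑ p : {s : Finset (Fin m) // s.card = n},
      (B.submatrix id (p.1.orderEmbOfFin p.2)).det *
        (C.submatrix (p.1.orderEmbOfFin p.2) id).det := by
  have h1 : (B * C).det = ∑ f : Fin n → Fin m,
      (∏ i, B i (f i)) * (C.submatrix f id).det := by
    have e0 : (fun i => (B * C) i) = (fun i => ∑ k, B i k • C k) := by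
      funext i j
      simp [Matrix.mul_apply]
    have e1 := ((Matrix.detRowAlternating :
        (Fin n → ℝ) [⋀^Fin n]→ₗ[ℝ] ℝ).toMultilinearMap).map_sum
        (g := fun (i : Fin n) (k : Fin m) => B i k • C k)
    calc (B * C).det
        = (Matrix.detRowAlternating :
            (Fin n → ℝ) [⋀^Fin n]→ₗ[ℝ] ℝ).toMultilinearMap (fun i => (B * C) i) := rfl
      _ = (Matrix.detRowAlternating :
            (Fin n → ℝ) [⋀^Fin n]→ₗ[ℝ] ℝ).toMultilinearMap (fun i => ∑ k, B i k • C k) := by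
          rw [e0]
      _ = ∑ r : Fin n → Fin m, (Matrix.detRowAlternating :
            (Fin n → ℝ) [⋀^Fin n]→ₗ[ℝ] ℝ).toMultilinearMap
            (fun i => B i (r i) • C (r i)) := e1
      _ = ∑ f : Fin n → Fin m, (∏ i, B i (f i)) * (C.submatrix f id).det := by
          refine Finset.sum_congr rfl fun f _ => ?_
          rw [MultilinearMap.map_smul_univ, smul_eq_mul]
          rfl
  rw [h1]
  rw [← Finset.sum_filter_add_sum_filter_not Finset.univ
    (fun f : Fin n → Fin m => Function.Injective f)]
  have h2 : ∑ f ∈ Finset.univ.filter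
      (fun f : Fin n → Fin m => ¬ Function.Injective f),
      (∏ i, B i (f i)) * (C.submatrix f id).det = 0 := by
    refine Finset.sum_eq_zero fun f hf => ?_
    have hninj : ¬ Function.Injective f := by simpa using hf
    rw [Function.not_injective_iff] at hninj
    obtain ⟨a, b, hab, hne⟩ := hninj
    have : (C.submatrix f id).det = 0 := by
      apply Matrix.det_zero_of_row_eq hne
      funext c
      simp [Matrix.submatrix_apply, hab]
    rw [this, mul_zero]
  rw [h2, add_zero]
  rw [sum_injective_eq (fun f => (∏ i, B i (f i)) * (C.submatrix f id).det)]
  rw [Fintype.sum_prod_type]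
  refine Finset.sum_congr rfl fun p _ => ?_
  have key : ∀ σ : Equiv.Perm (Fin n),
      (C.submatrix (fun i => p.1.orderEmbOfFin p.2 (σ i)) id).det =
        (Equiv.Perm.sign σ : ℝ) * (C.submatrix (p.1.orderEmbOfFin p.2) id).det := by
    intro σ
    have : C.submatrix (fun i => p.1.orderEmbOfFin p.2 (σ i)) id =
        (C.submatrix (p.1.orderEmbOfFin p.2) id).submatrix σ id := by
      ext r c; simp [Matrix.submatrix_apply]
    rw [this, Matrix.det_permute]
  calc ∑ σ : Equiv.Perm (Fin n),
      (∏ i, B i (p.1.orderEmbOfFin p.2 (σ i))) *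
        (C.submatrix (fun i => p.1.orderEmbOfFin p.2 (σ i)) id).det
      = ∑ σ : Equiv.Perm (Fin n), ((Equiv.Perm.sign σ : ℝ) *
          ∏ i, B i (p.1.orderEmbOfFin p.2 (σ i))) *
          (C.submatrix (p.1.orderEmbOfFin p.2) id).det := by
        refine Finset.sum_congr rfl fun σ _ => ?_
        rw [key σ]; ring
    _ = (B.submatrix id (p.1.orderEmbOfFin p.2)).det *
          (C.submatrix (p.1.orderEmbOfFin p.2) id).det := by
        rw [← Finset.sum_mul]
        congr 1
        rw [← Matrix.det_transpose, Matrix.det_apply']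
        refine Finset.sum_congr rfl fun σ _ => ?_
        congr 1

end CB

theorem adjugate_mul_transpose_eq_sum_det_embb_adjugate {m n : ℕ} (hmn : n ≤ m)
    (A : Matrix (Fin m) (Fin n) ℝ) :
    (A.transpose * A).adjugate * A.transpose =
      ∑ p : {s : Finset (Fin m) // s.card = n},
        (rowSub A p.1 p.2).det • embb ((rowSub A p.1 p.2).adjugate) p.1 p.2 := by
  ext i k
  have hL : ((Aᵀ * A).adjugate * Aᵀ) i k = ((Aᵀ * A).updateCol i (A k)).det := by
    have h1 : ((Aᵀ * A).adjugate * Aᵀ) i k = ((Aᵀ * A).adjugate *ᵥ (A k)) i := rfl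
    rw [h1, ← Matrix.cramer_eq_adjugate_mulVec, Matrix.cramer_apply]
  have hU : (Aᵀ * A).updateCol i (A k) = Aᵀ * (A.updateCol i (Pi.single k 1)) := by
    ext j j'
    by_cases hji : j' = i
    · subst hji
      simp [Matrix.updateCol_apply, Matrix.mul_apply, Pi.single_apply,
        mul_ite, mul_one, mul_zero, Finset.sum_ite_eq, Finset.mem_univ]
    · simp [Matrix.updateCol_apply, hji, Matrix.mul_apply]
  rw [hL, hU, cauchy_binet, Matrix.sum_apply]
  refine Finset.sum_congr rfl fun p _ => ?_
  have hB : ((Aᵀ).submatrix id (p.1.orderEmbOfFin p.2)).det = (rowSub A p.1 p.2).det := by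
    rw [← Matrix.det_transpose]
    congr 1
  have hC : (A.updateCol i (Pi.single k 1)).submatrix (p.1.orderEmbOfFin p.2) id =
      (rowSub A p.1 p.2).updateCol i
        (fun r => (Pi.single k (1:ℝ) : Fin m → ℝ) (p.1.orderEmbOfFin p.2 r)) := by
    ext r c
    simp [rowSub, Matrix.submatrix_apply, Matrix.updateCol_apply]
  rw [hB, hC]
  rw [Matrix.smul_apply, smul_eq_mul]
  congr 1
  simp only [embb]
  by_cases hk : k ∈ p.1
  · rw [dif_pos hk]
    set r0 : Fin n := (p.1.orderIsoOfFin p.2).symm ⟨k, hk⟩ with hr0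
    have hembr0 : p.1.orderEmbOfFin p.2 r0 = k := by
      rw [← Finset.coe_orderIsoOfFin_apply, hr0, OrderIso.apply_symm_apply]
    have hvec : (fun r => (Pi.single k (1:ℝ) : Fin m → ℝ) (p.1.orderEmbOfFin p.2 r)) =
        Pi.single r0 1 := by
      funext r
      by_cases hr : r = r0
      · subst hr; rw [hembr0]; simp
      · have hne : p.1.orderEmbOfFin p.2 r ≠ k := by
          intro h
          exact hr ((p.1.orderEmbOfFin p.2).injective (h.trans hembr0.symm))
        simp [Pi.single_apply, hne, hr]
    rw [hvec, ← Matrix.det_transpose, ← Matrix.updateRow_transpose,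
      ← Matrix.adjugate_apply, ← Matrix.adjugate_transpose, Matrix.transpose_apply]
  · rw [dif_neg hk]
    apply Matrix.det_eq_zero_of_column_eq_zero i
    intro r
    have hne : p.1.orderEmbOfFin p.2 r ≠ k :=
      fun h => hk (h ▸ Finset.orderEmbOfFin_mem p.1 p.2 r)
    simp [Matrix.updateCol_apply, Pi.single_apply, hne]
end

section
/- Let m ≥ n and consider the map g : M_{m×n}(ℝ) → ℝ, g(A) = Σ_{p ⊆ {1,…,m}, |p| = n} det(A_p)². Fix i ∈ {1,…,m} and j ∈ {1,…,n}. Then for every m×n real matrix A, the partial derivative of g with respect to the entry A_{ij} equals 2 · (Σ_{p} det(A_p) · embb(adj(A_p), p, m))_{ji}, i.e. 2 times the (j,i) entry of the n×m matrix Σ_p det(A_p) · embb(adj(A_p), p, m). -/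
open scoped Classical
open Matrix

/-! Perturbing the entry `A i j` changes `det (A_p)` only when `i ∈ p`, and then, by cofactor
expansion along the row of `A_p` coming from row `i`, affinely with slope
`embb (adj (A_p), p, m) j i`. So `t ↦ det (A_p)²` has derivative `2 det (A_p)` times that slope
at `0`; sum over `p`. -/

theorem Matrix.det_add_smul_single {ι R : Type*} [Fintype ι] [DecidableEq ι] [CommRing R]
    (M : Matrix ι ι R) (k j : ι) (t : R) :
    (M + t • single k j 1).det = M.det + t * M.adjugate j k := by
  have hrow : M + t • single k j 1 = M.updateRow k (M k + t • Pi.single j 1) := by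
    ext r c
    by_cases hr : r = k
    · subst hr
      simp [single_apply, Pi.single_apply, eq_comm]
    · simp [hr, Ne.symm hr]
  rw [hrow, det_updateRow_add, updateRow_eq_self, det_updateRow_smul, adjugate_apply]

section rowSub

variable {m n : ℕ} {p : Finset (Fin m)} (h : p.card = n)

theorem rowSub_add (A B : Matrix (Fin m) (Fin n) ℝ) :
    rowSub (A + B) p h = rowSub A p h + rowSub B p h :=
  rfl

theorem rowSub_smul (t : ℝ) (A : Matrix (Fin m) (Fin n) ℝ) :
    rowSub (t • A) p h = t • rowSub A p h :=
  rfl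

theorem rowSub_single_orderEmbOfFin (k j : Fin n) (c : ℝ) :
    rowSub (single (p.orderEmbOfFin h k) j c) p h = single k j c := by
  ext r s
  simp [rowSub, single_apply]

theorem rowSub_single_of_notMem {i : Fin m} (hi : i ∉ p) (j : Fin n) (c : ℝ) :
    rowSub (single i j c) p h = 0 := by
  ext r s
  have hr : p.orderEmbOfFin h r ≠ i := fun hr => hi (hr ▸ p.orderEmbOfFin_mem h r)
  simp [rowSub, Ne.symm hr]

theorem embb_apply_orderEmbOfFin (B : Matrix (Fin n) (Fin n) ℝ) (r k : Fin n) :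
    embb B p h r (p.orderEmbOfFin h k) = B r k := by
  simp [embb, ← Finset.coe_orderIsoOfFin_apply]

theorem embb_apply_of_notMem (B : Matrix (Fin n) (Fin n) ℝ) (r : Fin n) {i : Fin m}
    (hi : i ∉ p) : embb B p h r i = 0 :=
  dif_neg hi

theorem det_rowSub_add_smul_single (A : Matrix (Fin m) (Fin n) ℝ) (i : Fin m) (j : Fin n)
    (t : ℝ) :
    (rowSub (A + t • single i j 1) p h).det =
      (rowSub A p h).det + t * embb (rowSub A p h).adjugate p h j i := by
  rw [rowSub_add, rowSub_smul]
  by_cases hi : i ∈ p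
  · obtain ⟨k, rfl⟩ : i ∈ Set.range (p.orderEmbOfFin h) := by simpa using hi
    rw [rowSub_single_orderEmbOfFin, det_add_smul_single, embb_apply_orderEmbOfFin]
  · rw [rowSub_single_of_notMem h hi, smul_zero, add_zero, embb_apply_of_notMem h _ _ hi,
      mul_zero, add_zero]

end rowSub

theorem partialDeriv_sum_sq_det_general {m n : ℕ}
    (A : Matrix (Fin m) (Fin n) ℝ) (i : Fin m) (j : Fin n) :
    HasDerivAt
      (fun t : ℝ =>
        ∑ p : {s : Finset (Fin m) // s.card = n},
          (rowSub (A + t • Matrix.single i j 1) p.1 p.2).det ^ 2)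
      (2 * (∑ p : {s : Finset (Fin m) // s.card = n},
          (rowSub A p.1 p.2).det • embb ((rowSub A p.1 p.2).adjugate) p.1 p.2) j i) 0 := by
  have hsq (d c : ℝ) : HasDerivAt (fun t : ℝ => (d + t * c) ^ 2) (2 * (d * c)) 0 := by
    have hlin : HasDerivAt (fun t : ℝ => d + t * c) c 0 := by
      simpa using (hasDerivAt_mul_const c).const_add d
    refine (hlin.fun_pow 2).congr_deriv ?_
    simp [mul_assoc]
  have hterm (p : {s : Finset (Fin m) // s.card = n}) :
      HasDerivAt (fun t : ℝ => (rowSub (A + t • Matrix.single i j 1) p.1 p.2).det ^ 2)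
        (2 * ((rowSub A p.1 p.2).det * embb (rowSub A p.1 p.2).adjugate p.1 p.2 j i)) 0 := by
    simp only [det_rowSub_add_smul_single]
    exact hsq _ _
  refine (HasDerivAt.fun_sum fun p _ => hterm p).congr_deriv ?_
  simp [Matrix.sum_apply, Finset.mul_sum]

/-- The partial derivative of `g(A) = Σ_p det(A_p)²` with respect to the entry `A i j`
(i.e. the derivative at `t = 0` of `t ↦ g (A + t • E i j)`) equals `2` times the `(j,i)`
entry of `Σ_p det(A_p) • embb (adj (A_p), p, m)`. -/
theorem partialDeriv_sum_sq_det {m n : ℕ} (hmn : n ≤ m)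
    (A : Matrix (Fin m) (Fin n) ℝ) (i : Fin m) (j : Fin n) :
    HasDerivAt
      (fun t : ℝ =>
        ∑ p : {s : Finset (Fin m) // s.card = n},
          (rowSub (A + t • Matrix.single i j 1) p.1 p.2).det ^ 2)
      (2 * (∑ p : {s : Finset (Fin m) // s.card = n},
          (rowSub A p.1 p.2).det • embb ((rowSub A p.1 p.2).adjugate) p.1 p.2) j i) 0 :=
  partialDeriv_sum_sq_det_general A i j
end
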